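/- arXiv:1107.2306 — 3 statements merged into one kernel-verified Lean document; each statement's English description precedes it below -/
import Mathlib

section
/- Let m ≥ 1, and for x ∈ ℝ^{2m} set s(x) = √(x₁² + ⋯ + x_m²) and t(x) = √(x_{m+1}² + ⋯ + x_{2m}²). Define the Simons cone 𝒞 = {x ∈ ℝ^{2m} : s(x) = t(x)}. Then for every x ∈ ℝ^{2m}, the Euclidean distance from x to 𝒞 equals |s(x) − t(x)|/√2. -/
/-!
If `‖y.1‖ = ‖y.2‖ = r`, the reverse triangle inequality gives
`dist x y ^ 2 ≥ (s - r) ^ 2 + (t - r) ^ 2`, which is at least `(s - t) ^ 2 / 2`, the squared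
distance from `(s, t)` to the diagonal of `ℝ²`. Equality is attained by moving both components
of `x` radially to the common norm `r = (s + t) / 2`.
-/

open Metric

lemma sq_sub_div_two_le_sq_sub_add_sq_sub (s t r : ℝ) :
    (s - t) ^ 2 / 2 ≤ (s - r) ^ 2 + (t - r) ^ 2 := by
  nlinarith [sq_nonneg (s + t - 2 * r)]

lemma abs_sub_div_sqrt_two_eq_sqrt (s t : ℝ) : |s - t| / √2 = √((s - t) ^ 2 / 2) := by
  rw [Real.sqrt_div' _ zero_le_two, Real.sqrt_sq_eq_abs]

section Seminormed

variable {E : Type*} [SeminormedAddCommGroup E]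

variable (E) in
def simonsCone : Set (WithLp 2 (E × E)) := {x | ‖x.fst‖ = ‖x.snd‖}

lemma div_sqrt_two_le_dist_of_mem_simonsCone (x : WithLp 2 (E × E)) {y : WithLp 2 (E × E)}
    (hy : y ∈ simonsCone E) : |‖x.fst‖ - ‖x.snd‖| / √2 ≤ dist x y := by
  have h₁ : |‖x.fst‖ - ‖y.fst‖| ≤ dist x.fst y.fst :=
    dist_eq_norm x.fst y.fst ▸ abs_norm_sub_norm_le _ _
  have h₂ : |‖x.snd‖ - ‖y.fst‖| ≤ dist x.snd y.snd :=
    hy ▸ dist_eq_norm x.snd y.snd ▸ abs_norm_sub_norm_le _ _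
  rw [WithLp.prod_dist_eq_of_L2, abs_sub_div_sqrt_two_eq_sqrt]
  gcongr
  calc _ ≤ (‖x.fst‖ - ‖y.fst‖) ^ 2 + (‖x.snd‖ - ‖y.fst‖) ^ 2 :=
        sq_sub_div_two_le_sq_sub_add_sq_sub _ _ _
    _ ≤ _ := by
      rw [← sq_abs (‖x.fst‖ - _), ← sq_abs (‖x.snd‖ - _)]
      gcongr

end Seminormed

section Normed

variable {E : Type*} [NormedAddCommGroup E] [NormedSpace ℝ E]

lemma exists_norm_eq_one_and_eq_norm_smul [Nontrivial E] (a : E) :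
    ∃ u : E, ‖u‖ = 1 ∧ a = ‖a‖ • u := by
  rcases eq_or_ne a 0 with rfl | ha
  · obtain ⟨u, hu⟩ := exists_norm_eq E zero_le_one
    exact ⟨u, hu, by simp⟩
  · exact ⟨‖a‖⁻¹ • a, by simp [norm_smul, ha], by simp [smul_smul, ha]⟩

lemma exists_norm_eq_and_norm_sub_eq [Nontrivial E] (a : E) {r : ℝ} (hr : 0 ≤ r) :
    ∃ c : E, ‖c‖ = r ∧ ‖a - c‖ = |‖a‖ - r| := by
  obtain ⟨u, hu, hau⟩ := exists_norm_eq_one_and_eq_norm_smul a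
  refine ⟨r • u, by simp [norm_smul, hu, abs_of_nonneg hr], ?_⟩
  nth_rw 1 [hau]
  rw [← sub_smul, norm_smul, hu, mul_one, Real.norm_eq_abs]

lemma exists_mem_simonsCone_dist_eq (x : WithLp 2 (E × E)) :
    ∃ y ∈ simonsCone E, dist x y = |‖x.fst‖ - ‖x.snd‖| / √2 := by
  cases subsingleton_or_nontrivial E
  · refine ⟨x, by simp [simonsCone, Subsingleton.elim x.fst x.snd], ?_⟩
    simp [Subsingleton.elim x.fst x.snd]
  set r := (‖x.fst‖ + ‖x.snd‖) / 2
  have hr : 0 ≤ r := by positivity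
  obtain ⟨c, hc, hxc⟩ := exists_norm_eq_and_norm_sub_eq x.fst hr
  obtain ⟨d, hd, hxd⟩ := exists_norm_eq_and_norm_sub_eq x.snd hr
  refine ⟨WithLp.toLp 2 (c, d), by simp [simonsCone, hc, hd], ?_⟩
  rw [WithLp.prod_dist_eq_of_L2, abs_sub_div_sqrt_two_eq_sqrt]
  simp only [WithLp.toLp_fst, WithLp.toLp_snd, dist_eq_norm, hxc, hxd, sq_abs]
  congr 1
  ring

theorem infDist_simonsCone (x : WithLp 2 (E × E)) :
    infDist x (simonsCone E) = |‖x.fst‖ - ‖x.snd‖| / √2 := by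
  obtain ⟨y, hy, hxy⟩ := exists_mem_simonsCone_dist_eq x
  refine le_antisymm (hxy ▸ infDist_le_dist_of_mem hy) ?_
  exact (le_infDist ⟨y, hy⟩).2 fun _ ↦ div_sqrt_two_le_dist_of_mem_simonsCone x

end Normed

theorem stmt_3_general (m : ℕ)
    (C : Set (WithLp 2 (EuclideanSpace ℝ (Fin m) × EuclideanSpace ℝ (Fin m))))
    (hC : C = {x | ‖(WithLp.equiv 2 _ x).1‖ = ‖(WithLp.equiv 2 _ x).2‖}) :
    ∀ x : WithLp 2 (EuclideanSpace ℝ (Fin m) × EuclideanSpace ℝ (Fin m)),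
      Metric.infDist x C =
        |‖(WithLp.equiv 2 _ x).1‖ - ‖(WithLp.equiv 2 _ x).2‖| / Real.sqrt 2 := by
  subst hC
  exact infDist_simonsCone

/-- The distance from a point of `ℝ^{2m} = ℝ^m × ℝ^m` (with the Euclidean, i.e. `L²`, norm)
to the Simons cone `{s = t}` equals `|s - t| / √2`, where `s, t` are the norms of the
first and last `m` coordinates. -/
theorem stmt_3 (m : ℕ) (hm : 1 ≤ m)
    (C : Set (WithLp 2 (EuclideanSpace ℝ (Fin m) × EuclideanSpace ℝ (Fin m))))
    (hC : C = {x | ‖(WithLp.equiv 2 _ x).1‖ = ‖(WithLp.equiv 2 _ x).2‖}) :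
    ∀ x : WithLp 2 (EuclideanSpace ℝ (Fin m) × EuclideanSpace ℝ (Fin m)),
      Metric.infDist x C =
        |‖(WithLp.equiv 2 _ x).1‖ - ‖(WithLp.equiv 2 _ x).2‖| / Real.sqrt 2 :=
  stmt_3_general m C hC
end

section
/- The function v₀(x,λ) = (2/π) arctan(x/(λ + 1/π)) is harmonic in the upper half-plane ℝ²₊ = {(x,λ) : λ > 0}, satisfies −∂_λ v₀(x,0) = sin(π v₀(x,0)) for all x ∈ ℝ, is strictly increasing in x, and has limits ±1 as x → ±∞ (for each fixed λ ≥ 0). -/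
open Real Filter Topology

/-! With `c = λ + 1/π`, the function `arctan (x / c)` is the argument of `c + i x`, hence
harmonic wherever `c ≠ 0`. On the boundary `c = 1/π` one finds `-∂_λ v₀ = 2πx / (1 + (πx)²) = sin (2 arctan (πx)) = sin (π v₀)`,
the double-angle formula for `sin ∘ arctan`. Monotonicity and the limits `±1` are those of
`arctan`, rescaled by `2/π`. -/

lemma sin_two_mul_arctan (t : ℝ) : sin (2 * arctan t) = 2 * t / (1 + t ^ 2) := by
  have hs : 0 < 1 + t ^ 2 := by positivity
  rw [sin_two_mul, sin_arctan, cos_arctan]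
  field_simp
  rw [sq_sqrt hs.le]

lemma hasDerivAt_div_add_sq (p r y : ℝ) (h : r + y ^ 2 ≠ 0) :
    HasDerivAt (fun t => p / (r + t ^ 2)) (-(2 * p * y) / (r + y ^ 2) ^ 2) y := by
  refine ((hasDerivAt_const y p).div ((hasDerivAt_pow 2 y).const_add r) h).congr_deriv ?_
  simp only [zero_mul, Nat.cast_ofNat, Nat.add_one_sub_one, pow_one, zero_sub]
  ring

lemma hasDerivAt_arctan_div_const {c : ℝ} (hc : c ≠ 0) (x : ℝ) :
    HasDerivAt (fun x => arctan (x / c)) (c / (c ^ 2 + x ^ 2)) x := by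
  refine ((hasDerivAt_id' x).div_const c).arctan.congr_deriv ?_
  field_simp

lemma hasDerivAt_arctan_const_div (x : ℝ) {c : ℝ} (hc : c ≠ 0) :
    HasDerivAt (fun c => arctan (x / c)) (-x / (x ^ 2 + c ^ 2)) c := by
  refine ((hasDerivAt_inv hc).const_mul x).arctan.congr_deriv ?_
  field_simp
  ring

lemma deriv_deriv_arctan_div_const {c : ℝ} (hc : c ≠ 0) (x : ℝ) :
    deriv (deriv fun x => arctan (x / c)) x = -(2 * c * x) / (c ^ 2 + x ^ 2) ^ 2 := by
  have hderiv : deriv (fun x => arctan (x / c)) = fun x => c / (c ^ 2 + x ^ 2) :=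
    funext fun x => (hasDerivAt_arctan_div_const hc x).deriv
  rw [hderiv]
  exact (hasDerivAt_div_add_sq c (c ^ 2) x (by positivity)).deriv

lemma deriv_deriv_arctan_const_div (x : ℝ) {c : ℝ} (hc : c ≠ 0) :
    deriv (deriv fun c => arctan (x / c)) c = 2 * x * c / (x ^ 2 + c ^ 2) ^ 2 := by
  have hderiv : deriv (fun c => arctan (x / c)) =ᶠ[𝓝 c] fun c => -x / (x ^ 2 + c ^ 2) := by
    filter_upwards [isOpen_ne.mem_nhds hc] with c hc
    exact (hasDerivAt_arctan_const_div x hc).deriv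
  rw [hderiv.deriv_eq, (hasDerivAt_div_add_sq (-x) (x ^ 2) c (by positivity)).deriv]
  ring

theorem deriv_deriv_arctan_div_add_eq_zero {x l a : ℝ} (hla : l + a ≠ 0) :
    deriv (deriv fun x => arctan (x / (l + a))) x +
      deriv (deriv fun l => arctan (x / (l + a))) l = 0 := by
  have hshift : deriv (fun l => arctan (x / (l + a))) =
      fun l => deriv (fun c => arctan (x / c)) (l + a) :=
    funext fun l => deriv_comp_add_const (f := fun c => arctan (x / c)) a l
  rw [hshift, deriv_comp_add_const, deriv_deriv_arctan_div_const hla,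
    deriv_deriv_arctan_const_div x hla]
  ring

lemma strictMono_arctan_div_const {c : ℝ} (hc : 0 < c) : StrictMono fun x => arctan (x / c) :=
  arctan_strictMono.comp (StrictMono.div_const strictMono_id hc)

lemma tendsto_arctan_div_const_atTop {c : ℝ} (hc : 0 < c) :
    Tendsto (fun x => arctan (x / c)) atTop (𝓝 (π / 2)) :=
  tendsto_nhds_of_tendsto_nhdsWithin tendsto_arctan_atTop |>.comp (tendsto_id.atTop_div_const hc)

lemma tendsto_arctan_div_const_atBot {c : ℝ} (hc : 0 < c) :
    Tendsto (fun x => arctan (x / c)) atBot (𝓝 (-(π / 2))) :=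
  tendsto_nhds_of_tendsto_nhdsWithin tendsto_arctan_atBot |>.comp (tendsto_id.atBot_div_const hc)

/-- The explicit layer solution of the Peierls–Nabarro problem:
`v₀(x,λ) = (2/π) arctan(x/(λ + 1/π))` is harmonic in the upper half-plane, satisfies
the Neumann condition `-∂_λ v₀(x,0) = sin(π v₀(x,0))`, is strictly increasing in `x`,
and tends to `±1` as `x → ±∞` for each fixed `λ ≥ 0`. -/
theorem stmt_5 (v : ℝ → ℝ → ℝ)
    (hv : ∀ x l : ℝ, v x l = (2 / Real.pi) * Real.arctan (x / (l + 1 / Real.pi))) :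
    (∀ x l : ℝ, 0 < l →
      deriv (deriv (fun x' => v x' l)) x + deriv (deriv (fun l' => v x l')) l = 0) ∧
    (∀ x : ℝ, -(deriv (fun l' => v x l') 0) = Real.sin (Real.pi * v x 0)) ∧
    (∀ l : ℝ, 0 ≤ l → StrictMono (fun x => v x l)) ∧
    (∀ l : ℝ, 0 ≤ l →
      Tendsto (fun x => v x l) atTop (nhds 1) ∧
      Tendsto (fun x => v x l) atBot (nhds (-1))) := by
  obtain rfl : v = fun x l => 2 / π * arctan (x / (l + 1 / π)) := funext₂ hv
  refine ⟨fun x l hl => ?_, fun x => ?_, fun l hl => ?_, fun l hl => ⟨?_, ?_⟩⟩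
  · simp only [deriv_const_mul_field']
    rw [← mul_add, deriv_deriv_arctan_div_add_eq_zero (by positivity), mul_zero]
  · rw [deriv_const_mul_field, deriv_comp_add_const (f := fun c => arctan (x / c)) (1 / π) 0,
      (hasDerivAt_arctan_const_div x (by positivity)).deriv, ← mul_assoc,
      mul_div_cancel₀ _ pi_ne_zero, sin_two_mul_arctan]
    field_simp
    ring
  · exact (strictMono_arctan_div_const (by positivity)).const_mul (by positivity)
  · convert (tendsto_arctan_div_const_atTop (by positivity : 0 < l + 1 / π)).const_mul (2 / π)
      using 2
    field_simp
  · convert (tendsto_arctan_div_const_atBot (by positivity : 0 < l + 1 / π)).const_mul (2 / π)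
      using 2
    field_simp
end

section
/- Let H ⊂ ℝⁿ be a bounded domain and Ω = H × (0,∞). Let v ∈ C²(Ω) ∩ C(closure(Ω)) be bounded and harmonic in Ω. Then inf_Ω v = inf_{∂Ω} v. -/
/-!
Let `m` be the infimum of `v` on `∂Ω` and `v ≥ m - K` on `Ω` with `K ≥ 0`. On the truncated
cylinder `H × (0,T)` compare `v` with `w = v + f_T(λ)`, where `f_T(λ) = (K+1)λ/T - (λ/T)²`.
Since `f_T'' < 0`, `w` has negative Laplacian, so it has no interior local minimum (there every
second directional derivative is `≥ 0`) and its minimum over the compact closure is attained on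
the boundary. There `w ≥ m`: on the lid `λ = T` because `f_T(T) = K`, on the rest because
`f_T ≥ 0` on `[0,T]`. Hence `v ≥ m - f_T(λ)` in `Ω`, and `f_T(λ) → 0` as `T → ∞`.
-/

/-- Second derivative of `v : ℝⁿ × ℝ → ℝ` in the direction `d`. -/
noncomputable def secondDirDeriv (n : ℕ)
    (v : EuclideanSpace ℝ (Fin n) × ℝ → ℝ) (p d : EuclideanSpace ℝ (Fin n) × ℝ) : ℝ :=
  fderiv ℝ (fun q => fderiv ℝ v q d) p d

/-- Laplacian of `v : ℝⁿ × ℝ → ℝ` (coordinates `(x, λ)`). -/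
noncomputable def cylLaplacian (n : ℕ)
    (v : EuclideanSpace ℝ (Fin n) × ℝ → ℝ) (p : EuclideanSpace ℝ (Fin n) × ℝ) : ℝ :=
  (∑ i : Fin n, secondDirDeriv n v p (EuclideanSpace.single i 1, 0)) +
    secondDirDeriv n v p (0, 1)

open Set Filter Topology

/- Were `f''(x) < 0`, the second derivative test would make `x` also a local maximum, so `f`
would be locally constant and `f''(x) = 0`. -/
theorem IsLocalMin.deriv_deriv_nonneg {f : ℝ → ℝ} {x : ℝ} (hmin : IsLocalMin f x)
    (hf : ContinuousAt f x) : 0 ≤ deriv (deriv f) x := by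
  by_contra! hneg
  have hmax := isLocalMax_of_deriv_deriv_neg hneg hmin.deriv_eq_zero hf
  have hconst : f =ᶠ[𝓝 x] fun _ => f x :=
    (hmin.and hmax).mono fun y hy => le_antisymm hy.2 hy.1
  have : deriv (deriv f) x = 0 := by
    rw [hconst.deriv.deriv_eq]
    simp
  exact hneg.ne this

section Cylinder

variable {n : ℕ} {v g : EuclideanSpace ℝ (Fin n) × ℝ → ℝ} {p : EuclideanSpace ℝ (Fin n) × ℝ}

theorem ContDiffAt.differentiableAt_fderiv_apply (hv : ContDiffAt ℝ 2 v p)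
    (d : EuclideanSpace ℝ (Fin n) × ℝ) :
    DifferentiableAt ℝ (fun q => fderiv ℝ v q d) p :=
  ((hv.fderiv_right (m := 1) (by norm_num)).differentiableAt one_ne_zero).clm_apply
    (differentiableAt_const d)

theorem secondDirDeriv_add (hv : ContDiffAt ℝ 2 v p) (hg : ContDiffAt ℝ 2 g p)
    (d : EuclideanSpace ℝ (Fin n) × ℝ) :
    secondDirDeriv n (v + g) p d = secondDirDeriv n v p d + secondDirDeriv n g p d := by
  have hfderiv : (fun q => fderiv ℝ (v + g) q d) =ᶠ[𝓝 p]
      fun q => fderiv ℝ v q d + fderiv ℝ g q d := by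
    filter_upwards [hv.eventually (by simp), hg.eventually (by simp)] with q hvq hgq
    rw [fderiv_add (hvq.differentiableAt (by norm_num)) (hgq.differentiableAt (by norm_num))]
    rfl
  unfold secondDirDeriv
  rw [hfderiv.fderiv_eq, fderiv_fun_add (hv.differentiableAt_fderiv_apply d)
    (hg.differentiableAt_fderiv_apply d)]
  rfl

theorem cylLaplacian_add (hv : ContDiffAt ℝ 2 v p) (hg : ContDiffAt ℝ 2 g p) :
    cylLaplacian n (v + g) p = cylLaplacian n v p + cylLaplacian n g p := by
  simp only [cylLaplacian, secondDirDeriv_add hv hg, Finset.sum_add_distrib]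
  ring

theorem secondDirDeriv_comp_snd {f f' f'' : ℝ → ℝ} (hf : ∀ t, HasDerivAt f (f' t) t)
    (hf' : ∀ t, HasDerivAt f' (f'' t) t) (p d : EuclideanSpace ℝ (Fin n) × ℝ) :
    secondDirDeriv n (fun q => f q.2) p d = f'' p.2 * d.2 * d.2 := by
  have hfderiv : (fun q : EuclideanSpace ℝ (Fin n) × ℝ => fderiv ℝ (fun q => f q.2) q d) =
      fun q => f' q.2 * d.2 := by
    funext q
    rw [(show HasFDerivAt (fun q => f q.2) _ q from
      (hf q.2).comp_hasFDerivAt q hasFDerivAt_snd).fderiv]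
    simp
  unfold secondDirDeriv
  rw [hfderiv, (show HasFDerivAt (fun q => f' q.2 * d.2) _ p from
    ((hf' p.2).mul_const d.2).comp_hasFDerivAt p hasFDerivAt_snd).fderiv]
  simp

theorem cylLaplacian_comp_snd {f f' f'' : ℝ → ℝ} (hf : ∀ t, HasDerivAt f (f' t) t)
    (hf' : ∀ t, HasDerivAt f' (f'' t) t) (p : EuclideanSpace ℝ (Fin n) × ℝ) :
    cylLaplacian n (fun q => f q.2) p = f'' p.2 := by
  simp [cylLaplacian, secondDirDeriv_comp_snd hf hf']

theorem secondDirDeriv_nonneg_of_isLocalMin (hv : ContDiffAt ℝ 2 v p) (hmin : IsLocalMin v p)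
    (d : EuclideanSpace ℝ (Fin n) × ℝ) : 0 ≤ secondDirDeriv n v p d := by
  set line : ℝ → EuclideanSpace ℝ (Fin n) × ℝ := fun t => p + t • d
  have hline : ∀ t, HasDerivAt line d t := fun t => by
    simpa only [id, one_smul] using ((hasDerivAt_id t).smul_const d).const_add p
  have hline0 : line 0 = p := by simp [line]
  have hline_tendsto : Tendsto line (𝓝 0) (𝓝 p) := hline0 ▸ (hline 0).continuousAt
  have hderiv : deriv (v ∘ line) =ᶠ[𝓝 0] fun t => fderiv ℝ v (line t) d := by
    filter_upwards [hline_tendsto.eventually (hv.eventually (by simp))] with t ht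
    exact ((ht.differentiableAt (by norm_num)).hasFDerivAt.comp_hasDerivAt t (hline t)).deriv
  have hsecond : deriv (deriv (v ∘ line)) 0 = secondDirDeriv n v p d := by
    have hF : HasFDerivAt (fun q => fderiv ℝ v q d)
        (fderiv ℝ (fun q => fderiv ℝ v q d) p) (line 0) :=
      hline0 ▸ (hv.differentiableAt_fderiv_apply d).hasFDerivAt
    rw [hderiv.deriv_eq]
    exact (hF.comp_hasDerivAt 0 (hline 0)).deriv
  have hmin_line : IsLocalMin (v ∘ line) 0 := by
    simpa [IsLocalMin, IsMinFilter, hline0] using hline_tendsto.eventually hmin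
  have hcont : ContinuousAt (v ∘ line) 0 :=
    (hline0 ▸ (hv.continuousAt)).comp (hline 0).continuousAt
  exact hsecond ▸ hmin_line.deriv_deriv_nonneg hcont

theorem cylLaplacian_nonneg_of_isLocalMin (hv : ContDiffAt ℝ 2 v p) (hmin : IsLocalMin v p) :
    0 ≤ cylLaplacian n v p :=
  add_nonneg (Finset.sum_nonneg fun _ _ => secondDirDeriv_nonneg_of_isLocalMin hv hmin _)
    (secondDirDeriv_nonneg_of_isLocalMin hv hmin _)

theorem exists_mem_frontier_le_of_cylLaplacian_neg {w : EuclideanSpace ℝ (Fin n) × ℝ → ℝ}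
    {U : Set (EuclideanSpace ℝ (Fin n) × ℝ)} (hU : IsOpen U) (hcpt : IsCompact (closure U))
    (hwcont : ContinuousOn w (closure U)) (hw : ContDiffOn ℝ 2 w U)
    (hneg : ∀ p ∈ U, cylLaplacian n w p < 0) {q : EuclideanSpace ℝ (Fin n) × ℝ}
    (hq : q ∈ closure U) : ∃ p ∈ frontier U, w p ≤ w q := by
  obtain ⟨p, hp, hmin⟩ := hcpt.exists_isMinOn ⟨q, hq⟩ hwcont
  refine ⟨p, ?_, hmin hq⟩
  rw [hU.frontier_eq]
  refine ⟨hp, fun hpU => ?_⟩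
  have hloc : IsLocalMin w p :=
    hmin.isLocalMin (mem_of_superset (hU.mem_nhds hpU) subset_closure)
  exact (hneg p hpU).not_ge
    (cylLaplacian_nonneg_of_isLocalMin (hw.contDiffAt (hU.mem_nhds hpU)) hloc)

end Cylinder

noncomputable def cylBarrier (K T t : ℝ) : ℝ := (K + 1) * (t / T) - (t / T) ^ 2

section Barrier

variable {K T : ℝ}

theorem hasDerivAt_cylBarrier (hT : T ≠ 0) (t : ℝ) :
    HasDerivAt (cylBarrier K T) ((K + 1) / T - 2 * t / T ^ 2) t := by
  have hs : HasDerivAt (fun t => t / T) (1 / T) t := (hasDerivAt_id t).div_const T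
  refine ((hs.const_mul (K + 1)).sub (hs.pow 2)).congr_deriv ?_
  push_cast
  field_simp

theorem hasDerivAt_deriv_cylBarrier (t : ℝ) :
    HasDerivAt (fun t => (K + 1) / T - 2 * t / T ^ 2) (-2 / T ^ 2) t := by
  simpa [neg_div] using
    ((hasDerivAt_id t).const_mul 2 |>.div_const (T ^ 2)).const_sub ((K + 1) / T)

theorem contDiff_cylBarrier : ContDiff ℝ 2 (cylBarrier K T) := by
  unfold cylBarrier
  fun_prop

theorem cylBarrier_nonneg (hK : 0 ≤ K) {t : ℝ} (ht : t ∈ Icc 0 T) : 0 ≤ cylBarrier K T t := by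
  rcases ht.1.eq_or_lt with rfl | ht0
  · simp [cylBarrier]
  have hT : 0 < T := ht0.trans_le ht.2
  have hs : t / T ≤ 1 := (div_le_one hT).mpr ht.2
  have : 0 ≤ t / T := by positivity
  unfold cylBarrier
  nlinarith

theorem cylBarrier_self (hT : T ≠ 0) : cylBarrier K T T = K := by
  simp [cylBarrier, div_self hT]

theorem tendsto_cylBarrier_atTop (t : ℝ) :
    Tendsto (fun T => cylBarrier K T t) atTop (𝓝 0) := by
  have h : Tendsto (fun s : ℝ => (K + 1) * (t * s) - (t * s) ^ 2) (𝓝 0) (𝓝 0) := by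
    have : Continuous fun s : ℝ => (K + 1) * (t * s) - (t * s) ^ 2 := by fun_prop
    simpa using this.tendsto 0
  simpa [cylBarrier, div_eq_mul_inv, Function.comp_def] using (h.comp tendsto_inv_atTop_zero)

end Barrier

section HalfCylinder

variable {n : ℕ} {H : Set (EuclideanSpace ℝ (Fin n))} {v : EuclideanSpace ℝ (Fin n) × ℝ → ℝ}
  {m K T : ℝ}

theorem sub_cylBarrier_le (hHopen : IsOpen H) (hHbdd : Bornology.IsBounded H)
    (hv : ContDiffOn ℝ 2 v (H ×ˢ Ioi 0)) (hvcont : ContinuousOn v (closure (H ×ˢ Ioi 0)))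
    (hsuper : ∀ p ∈ H ×ˢ Ioi 0, cylLaplacian n v p ≤ 0)
    (hm : ∀ p ∈ frontier (H ×ˢ Ioi 0), m ≤ v p) (hK : 0 ≤ K)
    (hmK : ∀ p ∈ H ×ˢ Ioi 0, m - K ≤ v p) (hT : 0 < T) {q : EuclideanSpace ℝ (Fin n) × ℝ}
    (hq : q ∈ H ×ˢ Ioo 0 T) : m - cylBarrier K T q.2 ≤ v q := by
  set w := v + fun p : EuclideanSpace ℝ (Fin n) × ℝ => cylBarrier K T p.2
  have hsub : H ×ˢ Ioo 0 T ⊆ H ×ˢ Ioi 0 := prod_mono_right Ioo_subset_Ioi_self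
  have hclosure : closure (H ×ˢ Ioo 0 T) = closure H ×ˢ Icc 0 T := by
    rw [closure_prod_eq, closure_Ioo hT.ne]
  have hbarrier : ContDiff ℝ 2 fun p : EuclideanSpace ℝ (Fin n) × ℝ => cylBarrier K T p.2 :=
    contDiff_cylBarrier.comp contDiff_snd
  have hneg : ∀ p ∈ H ×ˢ Ioo 0 T, cylLaplacian n w p < 0 := by
    intro p hp
    have hvp : ContDiffAt ℝ 2 v p :=
      hv.contDiffAt ((hHopen.prod isOpen_Ioi).mem_nhds (hsub hp))
    rw [cylLaplacian_add hvp hbarrier.contDiffAt,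
      cylLaplacian_comp_snd (hasDerivAt_cylBarrier hT.ne') hasDerivAt_deriv_cylBarrier]
    have : 0 < 2 / T ^ 2 := by positivity
    linarith [hsuper p (hsub hp), neg_div (T ^ 2) 2]
  obtain ⟨p, hp, hpq⟩ := exists_mem_frontier_le_of_cylLaplacian_neg (hHopen.prod isOpen_Ioo)
    (hclosure ▸ (hHbdd.isCompact_closure.prod isCompact_Icc))
    ((hvcont.mono (closure_mono hsub)).add hbarrier.continuous.continuousOn)
    (hv.mono hsub |>.add hbarrier.contDiffOn) hneg (subset_closure hq)
  have hp_closure : p ∈ closure H ×ˢ Icc 0 T := hclosure ▸ frontier_subset_closure hp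
  have hmp : m ≤ w p := by
    by_cases hpΩ : p ∈ H ×ˢ Ioi 0
    · have hpT : p.2 = T :=
        hp_closure.2.2.antisymm (not_lt.mp fun h => hp.2 (by
          rw [(hHopen.prod isOpen_Ioo).interior_eq]; exact ⟨hpΩ.1, hpΩ.2, h⟩))
      have := hmK p hpΩ
      simp only [w, Pi.add_apply, hpT, cylBarrier_self hT.ne']
      linarith
    · have hpfr : p ∈ frontier (H ×ˢ Ioi 0) := by
        rw [(hHopen.prod isOpen_Ioi).frontier_eq]
        exact ⟨closure_mono hsub (frontier_subset_closure hp), hpΩ⟩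
      have := cylBarrier_nonneg hK hp_closure.2
      have := hm p hpfr
      simp only [w, Pi.add_apply]
      linarith
  have : m ≤ w q := hmp.trans hpq
  simp only [w, Pi.add_apply] at this
  linarith

theorem le_on_halfCylinder_of_le_on_frontier (hHopen : IsOpen H) (hHbdd : Bornology.IsBounded H)
    (hv : ContDiffOn ℝ 2 v (H ×ˢ Ioi 0)) (hvcont : ContinuousOn v (closure (H ×ˢ Ioi 0)))
    (hbdd : BddBelow (v '' (H ×ˢ Ioi 0))) (hsuper : ∀ p ∈ H ×ˢ Ioi 0, cylLaplacian n v p ≤ 0)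
    (hm : ∀ p ∈ frontier (H ×ˢ Ioi 0), m ≤ v p) {q : EuclideanSpace ℝ (Fin n) × ℝ}
    (hq : q ∈ H ×ˢ Ioi 0) : m ≤ v q := by
  obtain ⟨L, hL⟩ := hbdd
  have hK : 0 ≤ m - min L m := sub_nonneg.mpr (min_le_right _ _)
  have hmK : ∀ p ∈ H ×ˢ Ioi 0, m - (m - min L m) ≤ v p := fun p hp => by
    rw [sub_sub_cancel]
    exact (min_le_left _ _).trans (hL ⟨p, hp, rfl⟩)
  have hcompare : ∀ᶠ T in atTop, m - cylBarrier (m - min L m) T q.2 ≤ v q := by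
    filter_upwards [eventually_gt_atTop q.2] with T hT
    exact sub_cylBarrier_le hHopen hHbdd hv hvcont hsuper hm hK hmK (hq.2.trans hT)
      ⟨hq.1, hq.2, hT⟩
  simpa using le_of_tendsto ((tendsto_cylBarrier_atTop q.2).const_sub m) hcompare

end HalfCylinder

theorem ContinuousOn.csInf_image_le_of_mem_closure {α : Type*} [TopologicalSpace α] {f : α → ℝ}
    {s : Set α} (hf : ContinuousOn f (closure s)) (hbdd : BddBelow (f '' s)) {x : α}
    (hx : x ∈ closure s) : sInf (f '' s) ≤ f x :=
  closure_minimal (fun _ hy => csInf_le hbdd hy) isClosed_Ici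
    (hf.image_closure ⟨x, hx, rfl⟩)

/-- Maximum principle in an infinite half-cylinder `Ω = H × (0,∞)` over a bounded
domain `H`: a bounded harmonic function `v ∈ C²(Ω) ∩ C(closure Ω)` satisfies
`inf_Ω v = inf_{∂Ω} v`. -/
theorem stmt_9 (n : ℕ) (H : Set (EuclideanSpace ℝ (Fin n)))
    (hHopen : IsOpen H) (hHne : H.Nonempty) (hHbdd : Bornology.IsBounded H)
    (Ω : Set (EuclideanSpace ℝ (Fin n) × ℝ))
    (hΩ : Ω = {p | p.1 ∈ H ∧ 0 < p.2})
    (v : EuclideanSpace ℝ (Fin n) × ℝ → ℝ)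
    (hvC2 : ContDiffOn ℝ 2 v Ω)
    (hvcont : ContinuousOn v (closure Ω))
    (hvbdd : ∃ M : ℝ, ∀ p, |v p| ≤ M)
    (hharm : ∀ p ∈ Ω, cylLaplacian n v p = 0) :
    sInf (v '' Ω) = sInf (v '' frontier Ω) := by
  obtain ⟨M, hM⟩ := hvbdd
  obtain ⟨x₀, hx₀⟩ := hHne
  replace hΩ : Ω = H ×ˢ Ioi 0 := hΩ
  subst hΩ
  have hbdd : ∀ s, BddBelow (v '' s) := fun s =>
    ⟨-M, by rintro _ ⟨p, -, rfl⟩; exact neg_le_of_abs_le (hM p)⟩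
  have hbase : ((x₀, 0) : EuclideanSpace ℝ (Fin n) × ℝ) ∈ frontier (H ×ˢ Ioi 0) := by
    rw [(hHopen.prod isOpen_Ioi).frontier_eq, closure_prod_eq, closure_Ioi]
    exact ⟨⟨subset_closure hx₀, mem_Ici.mpr le_rfl⟩, fun h => lt_irrefl 0 (mem_Ioi.mp h.2)⟩
  apply le_antisymm
  · exact le_csInf ⟨_, mem_image_of_mem v hbase⟩ <| forall_mem_image.mpr fun p hp =>
      hvcont.csInf_image_le_of_mem_closure (hbdd _) (frontier_subset_closure hp)
  · have hinner : ((x₀, 1) : EuclideanSpace ℝ (Fin n) × ℝ) ∈ H ×ˢ Ioi 0 :=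
      ⟨hx₀, mem_Ioi.mpr one_pos⟩
    exact le_csInf ⟨_, mem_image_of_mem v hinner⟩ <| forall_mem_image.mpr fun q hq =>
      le_on_halfCylinder_of_le_on_frontier hHopen hHbdd hvC2 hvcont
        (hbdd _) (fun p hp => (hharm p hp).le) (fun p hp => csInf_le (hbdd _) ⟨p, hp, rfl⟩) hq
end
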